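/- Let u : ℝ × ℝⁿ → ℝⁿ be smooth, and suppose there exist continuously differentiable functions g, h, S : ℝ × ℝⁿ → ℝ, with S twice continuously differentiable, such that ∂ₜu + (u·∇)u = ∇g + h∇S everywhere. Let x : ℝ → ℝⁿ be a streamline, x′(t) = u(t, x(t)), and let v, w : ℝ → ℝⁿ satisfy v′(t) = D_x u(t, x(t)) v(t) and w′(t) = D_x u(t, x(t)) w(t). Then for all t, the derivative of t ↦ ω(t, x(t))(v(t), w(t)) equals ⟨∇h(t,x(t)), v(t)⟩⟨∇S(t,x(t)), w(t)⟩ − ⟨∇h(t,x(t)), w(t)⟩⟨∇S(t,x(t)), v(t)⟩. -/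

import Mathlib

open scoped RealInnerProductSpace
open InnerProductSpace ContinuousLinearMap

variable {E : Type*} [NormedAddCommGroup E] [InnerProductSpace ℝ E] [CompleteSpace E]

lemma inner_gradient_apply (f : E → ℝ) (x v : E) : ⟪gradient f x, v⟫ = fderiv ℝ f x v := by
  rw [gradient, ← InnerProductSpace.toDual_apply_apply, LinearIsometryEquiv.apply_symm_apply]

lemma grad_fderiv_symm {f : E → ℝ} {G : E → E} (hf : ∀ y, HasGradientAt f (G y) y)
    {x₀ : E} {DG : E →L[ℝ] E} (hG : HasFDerivAt G DG x₀) (v w : E) :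
    ⟪DG v, w⟫ = ⟪DG w, v⟫ := by
  have h1 : ∀ y, HasFDerivAt f (innerSL ℝ (G y)) y := by
    intro y
    have : innerSL ℝ (G y) = toDual ℝ E (G y) := by
      ext z; simp [InnerProductSpace.toDual_apply_apply]
    rw [this]
    exact (hf y).hasFDerivAt
  have h2 : HasFDerivAt (fun y => innerSL ℝ (G y)) ((innerSL ℝ).comp DG) x₀ :=
    ((innerSL ℝ (E := E)).hasFDerivAt).comp x₀ hG
  have := second_derivative_symmetric h1 h2 v w
  simpa using this


/-- The vorticity 2-form `ω(t,x)(v,w) = ⟨D_x u v, w⟩ − ⟨D_x u w, v⟩` of a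
time-dependent velocity field. -/
noncomputable def vorticity2Form {n : ℕ}
    (u : ℝ × EuclideanSpace ℝ (Fin n) → EuclideanSpace ℝ (Fin n))
    (t : ℝ) (x v w : EuclideanSpace ℝ (Fin n)) : ℝ :=
  ⟪fderiv ℝ (fun y => u (t, y)) x v, w⟫ - ⟪fderiv ℝ (fun y => u (t, y)) x w, v⟫

/-- Transport law `D̄ₜω = dh ∧ dS` for non-isentropic flow: the vorticity 2-form
evaluated on advected vectors has derivative `(dh ∧ dS)(v,w)`. -/
theorem vorticity_transport_nonisentropic (n : ℕ)
    (u : ℝ × EuclideanSpace ℝ (Fin n) → EuclideanSpace ℝ (Fin n))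
    (hu : ContDiff ℝ (⊤ : ℕ∞) u)
    (g h S : ℝ × EuclideanSpace ℝ (Fin n) → ℝ)
    (hg : ContDiff ℝ 1 g) (hh : ContDiff ℝ 1 h) (hS : ContDiff ℝ 2 S)
    (euler : ∀ (t : ℝ) (x : EuclideanSpace ℝ (Fin n)),
      deriv (fun τ => u (τ, x)) t + fderiv ℝ (fun y => u (t, y)) x (u (t, x))
        = gradient (fun y => g (t, y)) x + h (t, x) • gradient (fun y => S (t, y)) x)
    (x : ℝ → EuclideanSpace ℝ (Fin n))
    (hx : ∀ t, HasDerivAt x (u (t, x t)) t)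
    (v w : ℝ → EuclideanSpace ℝ (Fin n))
    (hv : ∀ t, HasDerivAt v (fderiv ℝ (fun y => u (t, y)) (x t) (v t)) t)
    (hw : ∀ t, HasDerivAt w (fderiv ℝ (fun y => u (t, y)) (x t) (w t)) t) :
    ∀ t : ℝ,
      HasDerivAt (fun τ => vorticity2Form u τ (x τ) (v τ) (w τ))
        (⟪gradient (fun y => h (t, y)) (x t), v t⟫ *
           ⟪gradient (fun y => S (t, y)) (x t), w t⟫ -
         ⟪gradient (fun y => h (t, y)) (x t), w t⟫ *
           ⟪gradient (fun y => S (t, y)) (x t), v t⟫) t := by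
  intro t
  set x₀ := x t with hx₀
  -- basic differentiability
  have hud : Differentiable ℝ u := hu.differentiable (by simp)
  have hu' : ContDiff ℝ (⊤ : ℕ∞) (fderiv ℝ u) := hu.fderiv_right (by simp)
  have hu'd : Differentiable ℝ (fderiv ℝ u) := hu'.differentiable (by simp)
  -- partial derivative in space
  have hpart : ∀ (s : ℝ) (y : (EuclideanSpace ℝ (Fin n))), HasFDerivAt (fun z => u (s, z))
      ((fderiv ℝ u (s, y)).comp (ContinuousLinearMap.inr ℝ ℝ (EuclideanSpace ℝ (Fin n)))) y := fun s y =>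
    ((hud (s, y)).hasFDerivAt).comp y (hasFDerivAt_prodMk_right s y)
  have hfd : ∀ (s : ℝ) (y : (EuclideanSpace ℝ (Fin n))), fderiv ℝ (fun z => u (s, z)) y
      = (fderiv ℝ u (s, y)).comp (ContinuousLinearMap.inr ℝ ℝ (EuclideanSpace ℝ (Fin n))) := fun s y => (hpart s y).fderiv
  set P := fderiv ℝ u (t, x₀) with hP
  set B := fderiv ℝ (fderiv ℝ u) (t, x₀) ((1 : ℝ), u (t, x₀)) with hB
  set Dv := P ((0 : ℝ), v t) with hDv
  set Dw := P ((0 : ℝ), w t) with hDw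
  -- the curve τ ↦ (τ, x τ)
  have hc : HasDerivAt (fun τ => ((τ : ℝ), x τ)) ((1 : ℝ), u (t, x₀)) t :=
    HasDerivAt.prodMk (hasDerivAt_id t) (hx t)
  have hΦc : HasDerivAt (fun τ => fderiv ℝ u (τ, x τ)) B t :=
    ((hu'd (t, x₀)).hasFDerivAt).comp_hasDerivAt t hc
  have hv' : HasDerivAt v Dv t := by
    have := hv t; rwa [hfd t (x t), ContinuousLinearMap.comp_apply,
      ContinuousLinearMap.inr_apply] at this
  have hw' : HasDerivAt w Dw t := by
    have := hw t; rwa [hfd t (x t), ContinuousLinearMap.comp_apply,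
      ContinuousLinearMap.inr_apply] at this
  have pv : HasDerivAt (fun τ => (((0 : ℝ), v τ) : ℝ × (EuclideanSpace ℝ (Fin n)))) ((0 : ℝ), Dv) t :=
    HasDerivAt.prodMk (hasDerivAt_const t (0 : ℝ)) hv'
  have pw : HasDerivAt (fun τ => (((0 : ℝ), w τ) : ℝ × (EuclideanSpace ℝ (Fin n)))) ((0 : ℝ), Dw) t :=
    HasDerivAt.prodMk (hasDerivAt_const t (0 : ℝ)) hw'
  have q1 : HasDerivAt (fun τ => fderiv ℝ u (τ, x τ) ((0 : ℝ), v τ))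
      (B ((0 : ℝ), v t) + P ((0 : ℝ), Dv)) t := hΦc.clm_apply pv
  have q2 : HasDerivAt (fun τ => fderiv ℝ u (τ, x τ) ((0 : ℝ), w τ))
      (B ((0 : ℝ), w t) + P ((0 : ℝ), Dw)) t := hΦc.clm_apply pw
  have r1 := q1.inner ℝ (hw' : HasDerivAt w Dw t)
  have r2 := q2.inner ℝ (hv' : HasDerivAt v Dv t)
  have hF := r1.sub r2
  -- identify the function with the vorticity form
  have hfun : (fun τ => vorticity2Form u τ (x τ) (v τ) (w τ))
      = fun τ => ⟪fderiv ℝ u (τ, x τ) ((0 : ℝ), v τ), w τ⟫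
        - ⟪fderiv ℝ u (τ, x τ) ((0 : ℝ), w τ), v τ⟫ := by
    funext τ
    simp only [vorticity2Form, hfd τ (x τ), ContinuousLinearMap.comp_apply,
      ContinuousLinearMap.inr_apply]
  rw [hfun]
  -- time derivative at a fixed space point
  have htime : ∀ (s : ℝ) (y : EuclideanSpace ℝ (Fin n)), HasDerivAt (fun τ => u (τ, y))
      (fderiv ℝ u (s, y) ((1 : ℝ), (0 : EuclideanSpace ℝ (Fin n)))) s := fun s y =>
    ((hud (s, y)).hasFDerivAt).comp_hasDerivAt s (HasDerivAt.prodMk (hasDerivAt_id s) (hasDerivAt_const s y))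
  -- pointwise Euler identity for the full material derivative
  have euler' : ∀ (s : ℝ) (y : EuclideanSpace ℝ (Fin n)),
      fderiv ℝ u (s, y) ((1 : ℝ), u (s, y))
        = gradient (fun z => g (s, z)) y + h (s, y) • gradient (fun z => S (s, z)) y := by
    intro s y
    have e := euler s y
    rw [(htime s y).deriv, hfd s y, ContinuousLinearMap.comp_apply,
      ContinuousLinearMap.inr_apply] at e
    have hsplit : (((1 : ℝ), u (s, y)) : ℝ × EuclideanSpace ℝ (Fin n))
        = ((1 : ℝ), (0 : EuclideanSpace ℝ (Fin n))) + ((0 : ℝ), u (s, y)) := by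
      simp [Prod.mk_add_mk]
    rw [hsplit, map_add]
    exact e
  -- spatial derivative of the material derivative
  have hΦy : HasFDerivAt (fun y => fderiv ℝ u (t, y))
      ((fderiv ℝ (fderiv ℝ u) (t, x₀)).comp (ContinuousLinearMap.inr ℝ ℝ (EuclideanSpace ℝ (Fin n)))) x₀ :=
    ((hu'd (t, x₀)).hasFDerivAt).comp x₀ (hasFDerivAt_prodMk_right t x₀)
  have hfy : HasFDerivAt (fun y => (((1 : ℝ), u (t, y)) : ℝ × EuclideanSpace ℝ (Fin n)))
      ((0 : EuclideanSpace ℝ (Fin n) →L[ℝ] ℝ).prod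
        ((fderiv ℝ u (t, x₀)).comp (ContinuousLinearMap.inr ℝ ℝ (EuclideanSpace ℝ (Fin n))))) x₀ :=
    HasFDerivAt.prodMk (hasFDerivAt_const (1 : ℝ) x₀) (hpart t x₀)
  have hM := hΦy.clm_apply hfy
  set L := (fderiv ℝ u (t, x₀)).comp
      ((0 : EuclideanSpace ℝ (Fin n) →L[ℝ] ℝ).prod
        ((fderiv ℝ u (t, x₀)).comp (ContinuousLinearMap.inr ℝ ℝ (EuclideanSpace ℝ (Fin n)))))
      + ((fderiv ℝ (fderiv ℝ u) (t, x₀)).comp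
          (ContinuousLinearMap.inr ℝ ℝ (EuclideanSpace ℝ (Fin n)))).flip ((1 : ℝ), u (t, x₀))
    with hLdef
  -- symmetry of the second derivative of u
  have hsymm : ∀ z₁ z₂ : ℝ × EuclideanSpace ℝ (Fin n),
      fderiv ℝ (fderiv ℝ u) (t, x₀) z₁ z₂ = fderiv ℝ (fderiv ℝ u) (t, x₀) z₂ z₁ :=
    second_derivative_symmetric (fun p => (hud p).hasFDerivAt) ((hu'd (t, x₀)).hasFDerivAt)
  have hLapp : ∀ z : EuclideanSpace ℝ (Fin n),
      L z = P ((0 : ℝ), P ((0 : ℝ), z)) + B ((0 : ℝ), z) := by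
    intro z
    simp only [hLdef, ContinuousLinearMap.add_apply, ContinuousLinearMap.comp_apply,
      ContinuousLinearMap.prod_apply, ContinuousLinearMap.zero_apply,
      ContinuousLinearMap.flip_apply, ContinuousLinearMap.inr_apply, hB]
    rw [hsymm ((0 : ℝ), z) ((1 : ℝ), u (t, x₀))]
  -- gradient fields at time t
  set Sg : EuclideanSpace ℝ (Fin n) → EuclideanSpace ℝ (Fin n) :=
    fun y => gradient (fun z => S (t, z)) y with hSgdef
  have hSt : ContDiff ℝ 2 (fun z => S (t, z)) := hS.comp (contDiff_const.prodMk contDiff_id)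
  have hSgC : ContDiff ℝ 1 Sg := by
    have h1 : ContDiff ℝ 1 (fderiv ℝ (fun z => S (t, z))) := hSt.fderiv_right (by norm_num)
    exact ((toDual ℝ (EuclideanSpace ℝ (Fin n))).symm.contDiff).comp h1
  have hSgd : HasFDerivAt Sg (fderiv ℝ Sg x₀) x₀ :=
    ((hSgC.differentiable one_ne_zero) x₀).hasFDerivAt
  set DS := fderiv ℝ Sg x₀ with hDSdef
  have hSgrad : ∀ y, HasGradientAt (fun z => S (t, z)) (Sg y) y := fun y =>
    ((hSt.differentiable (by norm_num)) y).hasGradientAt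
  have hSsymm := grad_fderiv_symm hSgrad hSgd
  -- entropy-coefficient field
  have hht : ContDiff ℝ 1 (fun z => h (t, z)) := hh.comp (contDiff_const.prodMk contDiff_id)
  set dh := fderiv ℝ (fun z => h (t, z)) x₀ with hdhdef
  have hhd : HasFDerivAt (fun z => h (t, z)) dh x₀ := ((hht.differentiable one_ne_zero) x₀).hasFDerivAt
  have hdh : ∀ z, dh z = ⟪gradient (fun z => h (t, z)) x₀, z⟫ := fun z =>
    (inner_gradient_apply _ x₀ z).symm
  have hhs : HasFDerivAt (fun y => h (t, y) • Sg y)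
      (h (t, x₀) • DS + dh.smulRight (Sg x₀)) x₀ := hhd.smul hSgd
  -- gradient of g
  set G : EuclideanSpace ℝ (Fin n) → EuclideanSpace ℝ (Fin n) :=
    fun y => gradient (fun z => g (t, z)) y with hGdef
  have hGgrad : ∀ y, HasGradientAt (fun z => g (t, z)) (G y) y := fun y =>
    (((hg.comp (contDiff_const.prodMk contDiff_id)).differentiable one_ne_zero) y).hasGradientAt
  have hGfun : G = fun y => fderiv ℝ u (t, y) ((1 : ℝ), u (t, y)) - h (t, y) • Sg y := by
    funext y
    exact (eq_sub_iff_add_eq).2 (euler' t y).symm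
  have hGd : HasFDerivAt G (L - (h (t, x₀) • DS + dh.smulRight (Sg x₀))) x₀ := by
    rw [hGfun]
    exact hM.sub hhs
  have hGsymm := grad_fderiv_symm hGgrad hGd
  set Q := h (t, x₀) • DS + dh.smulRight (Sg x₀) with hQdef
  -- assemble the value of the derivative
  have happ : ∀ z y : EuclideanSpace ℝ (Fin n),
      ⟪L z, y⟫ = ⟪(L - Q) z, y⟫ + h (t, x₀) * ⟪DS z, y⟫ + dh z * ⟪Sg x₀, y⟫ := by
    intro z y
    have hz : L z = (L - Q) z + (h (t, x₀) • DS z + dh z • Sg x₀) := by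
      simp only [hQdef, ContinuousLinearMap.sub_apply, ContinuousLinearMap.add_apply,
        ContinuousLinearMap.smul_apply, ContinuousLinearMap.smulRight_apply]
      abel
    rw [hz, inner_add_left, inner_add_left, real_inner_smul_left, real_inner_smul_left]
    ring
  have key : ⟪L (v t), w t⟫ - ⟪L (w t), v t⟫
      = ⟪gradient (fun y => h (t, y)) x₀, v t⟫ * ⟪gradient (fun y => S (t, y)) x₀, w t⟫
        - ⟪gradient (fun y => h (t, y)) x₀, w t⟫ * ⟪gradient (fun y => S (t, y)) x₀, v t⟫ := by
    rw [happ (v t) (w t), happ (w t) (v t), hGsymm (v t) (w t), hSsymm (v t) (w t),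
      hdh (v t), hdh (w t)]
    simp only [hSgdef]
    ring
  have e1 : B ((0 : ℝ), v t) + P ((0 : ℝ), Dv) = L (v t) := by
    rw [hLapp (v t), hDv]; exact add_comm _ _
  have e2 : B ((0 : ℝ), w t) + P ((0 : ℝ), Dw) = L (w t) := by
    rw [hLapp (w t), hDw]; exact add_comm _ _
  have hDval : ⟪(fderiv ℝ u (t, x t)) ((0 : ℝ), v t), Dw⟫ + ⟪B ((0 : ℝ), v t) + P ((0 : ℝ), Dv), w t⟫
      - (⟪(fderiv ℝ u (t, x t)) ((0 : ℝ), w t), Dv⟫ + ⟪B ((0 : ℝ), w t) + P ((0 : ℝ), Dw), v t⟫)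
      = ⟪gradient (fun y => h (t, y)) x₀, v t⟫ * ⟪gradient (fun y => S (t, y)) x₀, w t⟫
        - ⟪gradient (fun y => h (t, y)) x₀, w t⟫ * ⟪gradient (fun y => S (t, y)) x₀, v t⟫ := by
    rw [e1, e2]
    have hc1 : ⟪(fderiv ℝ u (t, x t)) ((0 : ℝ), v t), Dw⟫
        = ⟪(fderiv ℝ u (t, x t)) ((0 : ℝ), w t), Dv⟫ := by
      rw [hDv, hDw, hP]
      exact real_inner_comm _ _
    rw [hc1]
    linarith [key]
  exact hDval ▸ hF
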